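/- arXiv:math/0612541 — 4 statements merged into one kernel-verified Lean document; each statement's English description precedes it below -/
import Mathlib

section
/- Let Q be a finite quiver. A finite-dimensional representation V of Q is nilpotent (i.e., V_ω is a nilpotent endomorphism for every oriented cycle ω) if and only if there exists a positive integer r such that V_ω = 0 for every path ω in Q of length ≥ r. -/
/-- Evaluation of a representation on a path: `pathMap f (α_m … α_1) = f α_m ∘ … ∘ f α_1`. -/
def pathMap {k : Type*} [Field k] {Q : Type*} [Quiver Q] {V : Q → Type*}
    [∀ i, AddCommGroup (V i)] [∀ i, Module k (V i)]
    (f : ∀ {i j : Q}, (i ⟶ j) → (V i →ₗ[k] V j)) :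
    ∀ {i j : Q}, Quiver.Path i j → (V i →ₗ[k] V j)
  | _, _, Quiver.Path.nil => LinearMap.id
  | _, _, Quiver.Path.cons p a => (f a).comp (pathMap f p)

/-!
Embed the representation into `End (⨁ V m)` by placing `V_p : V i → V j` in the block `(j, i)`.
Nonzero products of such blocks are again blocks of paths, so the blocks of paths of positive
length together with `0` form a multiplicatively closed set `S`; if cycles act nilpotently, every
element of `S` is nilpotent (blocks of non-closed paths square to zero).

Levitzki's theorem then kills every product of `dim (⨁ V m)` elements of `S`. Its proof: a
nonzero `s ∈ S` of minimal rank satisfies `s * s = 0` and `s * t * s = 0` for `t ∈ S`, since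
otherwise a nilpotent element would map the range of `s` onto itself. Hence
`ker s ⊓ ⨅ t ∈ S, ker (s * t)` is an `S`-invariant subspace, nonzero (it contains the range of `s`)
and proper, and induction on the dimension applies to it and to the quotient.

Conversely, the powers of a cycle are paths of unbounded length.
-/

open Module Pointwise

def LevitzkiBound (M : Type*) [MonoidWithZero M] (n : ℕ) : Prop :=
  ∀ T : Set M, (∀ a ∈ T, ∀ b ∈ T, a * b ∈ T) → (∀ a ∈ T, IsNilpotent a) → T ^ n ⊆ {0}

namespace Submonoid

variable {M N : Type*}

theorem exists_mem_pow_of_forall_exists [Monoid M] [Monoid N] (P : Submonoid (M × N))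
    {S : Set M} {T : Set N} (h : ∀ a ∈ S, ∃ b ∈ T, (a, b) ∈ P) :
    ∀ n : ℕ, ∀ a ∈ S ^ n, ∃ b ∈ T ^ n, (a, b) ∈ P
  | 0, a, ha => ⟨1, Set.mem_one.2 rfl, by rw [Set.mem_one.1 ha]; exact P.one_mem⟩
  | n + 1, _, hmem => by
    obtain ⟨a, ha, a', ha', rfl⟩ := Set.mem_mul.1 (pow_succ S n ▸ hmem)
    obtain ⟨b, hb, hab⟩ := exists_mem_pow_of_forall_exists P h n a ha
    obtain ⟨b', hb', hab'⟩ := h a' ha'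
    exact ⟨b * b', pow_succ T n ▸ Set.mul_mem_mul hb hb', P.mul_mem hab hab'⟩

/-- The partners under `P` of elements of `S` form a multiplicatively closed set of nilpotents
of `N`, to which `hN` applies. -/
theorem mk_zero_mem_of_mem_pow [MonoidWithZero M] [MonoidWithZero N] (P : Submonoid (M × N))
    (eq_zero : ∀ b, ((0 : M), b) ∈ P → b = 0) {S : Set M} (hS : ∀ a ∈ S, ∀ b ∈ S, a * b ∈ S)
    (hnil : ∀ a ∈ S, IsNilpotent a) (hP : ∀ a ∈ S, ∃ b, (a, b) ∈ P) {n : ℕ}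
    (hN : LevitzkiBound N n) :
    ∀ a ∈ S ^ n, ((a, 0) : M × N) ∈ P := by
  set T : Set N := {b | ∃ a ∈ S, (a, b) ∈ P}
  have hT : ∀ b ∈ T, ∀ b' ∈ T, b * b' ∈ T := by
    rintro b ⟨a, ha, hab⟩ b' ⟨a', ha', hab'⟩
    exact ⟨a * a', hS a ha a' ha', P.mul_mem hab hab'⟩
  have hTnil : ∀ b ∈ T, IsNilpotent b := by
    rintro b ⟨a, ha, hab⟩
    obtain ⟨m, hm⟩ := hnil a ha
    exact ⟨m, eq_zero _ (hm ▸ P.pow_mem hab m)⟩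
  have hST : ∀ a ∈ S, ∃ b ∈ T, (a, b) ∈ P := fun a ha =>
    (hP a ha).imp fun b hab => ⟨⟨a, ha, hab⟩, hab⟩
  intro a ha
  obtain ⟨b, hb, hab⟩ := exists_mem_pow_of_forall_exists P hST n a ha
  rwa [← Set.mem_singleton_iff.1 (hN T hT hTnil hb)]

end Submonoid

namespace Submodule

variable {K W : Type*} [Field K] [AddCommGroup W] [Module K W]

theorem eq_bot_of_map_eq_self {a : End K W} (ha : IsNilpotent a) {P : Submodule K W}
    (h : P.map a = P) : P = ⊥ := by
  obtain ⟨n, hn⟩ := ha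
  have hpow : ∀ m : ℕ, P.map (a ^ m) = P := by
    intro m
    induction m with
    | zero => rw [pow_zero, End.one_eq_id, map_id]
    | succ m ih => rw [pow_succ', End.mul_eq_comp, map_comp, ih, h]
  rw [← hpow n, hn, Submodule.map_zero]

def restrictionPairs (U : Submodule K W) : Submonoid (End K W × End K U) where
  carrier := {p | U.subtype ∘ₗ p.2 = p.1 ∘ₗ U.subtype}
  one_mem' := rfl
  mul_mem' {p q} hp hq := by
    simp only [Set.mem_ofPred_eq, Prod.fst_mul, Prod.snd_mul, End.mul_eq_comp] at hp hq ⊢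
    rw [← LinearMap.comp_assoc, hp, LinearMap.comp_assoc, hq, LinearMap.comp_assoc]

def quotientPairs (U : Submodule K W) : Submonoid (End K W × End K (W ⧸ U)) where
  carrier := {p | p.2 ∘ₗ U.mkQ = U.mkQ ∘ₗ p.1}
  one_mem' := rfl
  mul_mem' {p q} hp hq := by
    simp only [Set.mem_ofPred_eq, Prod.fst_mul, Prod.snd_mul, End.mul_eq_comp] at hp hq ⊢
    rw [LinearMap.comp_assoc, hq, ← LinearMap.comp_assoc, hp, LinearMap.comp_assoc]

theorem eq_zero_of_zero_mem_restrictionPairs (U : Submodule K W) {v : End K U}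
    (hv : (0, v) ∈ U.restrictionPairs) : v = 0 := by
  ext x
  simpa using congr($hv x)

theorem eq_zero_of_zero_mem_quotientPairs (U : Submodule K W) {v : End K (W ⧸ U)}
    (hv : (0, v) ∈ U.quotientPairs) : v = 0 :=
  U.linearMap_qext (hv.trans (LinearMap.comp_zero _))

end Submodule

namespace Module.End

variable {K W : Type*} [Field K] [AddCommGroup W] [Module K W] {S : Set (End K W)}

theorem pow_subset_zero_of_invariant_submodule (hS : ∀ a ∈ S, ∀ b ∈ S, a * b ∈ S)
    (hnil : ∀ a ∈ S, IsNilpotent a) (U : Submodule K W) (hU : ∀ u ∈ S, ∀ x ∈ U, u x ∈ U)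
    {n₁ n₂ : ℕ} (h₁ : LevitzkiBound (End K U) n₁) (h₂ : LevitzkiBound (End K (W ⧸ U)) n₂) :
    S ^ (n₁ + n₂) ⊆ {0} := by
  rintro _ hx
  obtain ⟨a, ha, b, hb, rfl⟩ := Set.mem_mul.1 (pow_add S n₁ n₂ ▸ hx)
  have ha0 : 0 = a ∘ₗ U.subtype :=
    U.restrictionPairs.mk_zero_mem_of_mem_pow (fun _ => U.eq_zero_of_zero_mem_restrictionPairs)
      hS hnil (fun u hu => ⟨u.restrict (hU u hu), rfl⟩) h₁ a ha
  have hb0 : 0 = U.mkQ ∘ₗ b :=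
    U.quotientPairs.mk_zero_mem_of_mem_pow (fun _ => U.eq_zero_of_zero_mem_quotientPairs)
      hS hnil (fun u hu => ⟨U.mapQ U u (hU u hu), U.mapQ_mkQ U u (h := hU u hu)⟩) h₂ b hb
  refine Set.mem_singleton_iff.2 (LinearMap.ext fun x => ?_)
  have hbx : b x ∈ U := (Submodule.Quotient.mk_eq_zero U).1 congr($hb0.symm x)
  exact congr($ha0.symm ⟨b x, hbx⟩)

section FiniteDimensional

variable [FiniteDimensional K W]

theorem finrank_range_mul_lt {a s : End K W} (ha : IsNilpotent a) (hs : s ≠ 0)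
    (hle : LinearMap.range (a * s) ≤ LinearMap.range s) :
    finrank K (LinearMap.range (a * s)) < finrank K (LinearMap.range s) := by
  refine lt_of_le_of_ne (Submodule.finrank_mono hle) fun heq => hs ?_
  have hmap : (LinearMap.range s).map a = LinearMap.range s := by
    rw [← LinearMap.range_comp, ← mul_eq_comp]
    exact Submodule.eq_of_le_of_finrank_eq hle heq
  exact LinearMap.range_eq_bot.1 (Submodule.eq_bot_of_map_eq_self ha hmap)

theorem exists_ne_zero_mul_mul_eq_zero (hS : ∀ a ∈ S, ∀ b ∈ S, a * b ∈ S)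
    (hnil : ∀ a ∈ S, IsNilpotent a) (hne : ∃ s ∈ S, s ≠ 0) :
    ∃ s ∈ S, s ≠ 0 ∧ s * s = 0 ∧ ∀ t ∈ S, s * t * s = 0 := by
  obtain ⟨s, ⟨hsS, hs0⟩, hmin⟩ := exists_minimalFor_of_wellFoundedLT
    (fun s => s ∈ S ∧ s ≠ 0) (fun s => finrank K (LinearMap.range s)) hne
  have hkill : ∀ a, IsNilpotent a → a * s ∈ S →
      LinearMap.range (a * s) ≤ LinearMap.range s → a * s = 0 := fun a ha has hle => by
    by_contra h
    have hlt := finrank_range_mul_lt ha hs0 hle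
    exact hlt.not_ge (hmin ⟨has, h⟩ hlt.le)
  refine ⟨s, hsS, hs0, hkill s (hnil s hsS) (hS s hsS s hsS) (LinearMap.range_comp_le_range _ _),
    fun t ht => ?_⟩
  have hst := hS s hsS t ht
  refine hkill _ (hnil _ hst) (hS _ hst s hsS) ?_
  rw [mul_assoc]
  exact LinearMap.range_comp_le_range _ _

theorem exists_invariant_submodule (hS : ∀ a ∈ S, ∀ b ∈ S, a * b ∈ S)
    (hnil : ∀ a ∈ S, IsNilpotent a) (hne : ∃ s ∈ S, s ≠ 0) :
    ∃ U : Submodule K W, U ≠ ⊥ ∧ U ≠ ⊤ ∧ ∀ u ∈ S, ∀ x ∈ U, u x ∈ U := by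
  obtain ⟨s, hsS, hs0, hss, hsts⟩ := exists_ne_zero_mul_mul_eq_zero hS hnil hne
  let U := LinearMap.ker s ⊓ ⨅ t ∈ S, LinearMap.ker (s * t)
  have hmem : ∀ x, x ∈ U ↔ s x = 0 ∧ ∀ t ∈ S, s (t x) = 0 := by
    simp [U, Submodule.mem_iInf]
  have hrange : LinearMap.range s ≤ U := by
    rintro _ ⟨y, rfl⟩
    exact (hmem _).2 ⟨congr($hss y), fun t ht => congr($(hsts t ht) y)⟩
  refine ⟨U, fun hU => hs0 ?_, fun hU => hs0 ?_, fun u hu x hx => ?_⟩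
  · exact LinearMap.range_eq_bot.1 (le_bot_iff.1 (hU ▸ hrange))
  · exact LinearMap.ext fun x => ((hmem x).1 (hU ▸ Submodule.mem_top)).1
  · obtain ⟨-, hstx⟩ := (hmem x).1 hx
    exact (hmem _).2 ⟨hstx u hu, fun t ht => hstx _ (hS t ht u hu)⟩

theorem levitzkiBound_of_finrank_le {n : ℕ} (hn : finrank K W ≤ n) :
    LevitzkiBound (End K W) n := by
  intro S hS hnil
  obtain ⟨d, hd⟩ : ∃ d, finrank K W = d := ⟨_, rfl⟩
  induction d using Nat.strong_induction_on generalizing W n with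
  | _ d ih =>
  by_cases hne : ∃ s ∈ S, s ≠ 0
  · obtain ⟨U, hU_bot, hU_top, hU⟩ := exists_invariant_submodule hS hnil hne
    have hsum := Submodule.finrank_quotient_add_finrank U
    have hU_pos : 0 < finrank K U := Nat.pos_of_ne_zero (Submodule.finrank_eq_zero.not.2 hU_bot)
    have hU_lt : finrank K U < d := hd ▸ Submodule.finrank_lt hU_top
    obtain ⟨m, rfl⟩ : ∃ m, n = m + finrank K (W ⧸ U) := ⟨n - finrank K (W ⧸ U), by omega⟩
    exact pow_subset_zero_of_invariant_submodule hS hnil U hU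
      (fun T hT hTnil => ih _ hU_lt (by omega) T hT hTnil rfl)
      (fun T hT hTnil => ih _ (by omega) le_rfl T hT hTnil rfl)
  · push Not at hne
    rintro x hx
    cases n with
    | zero =>
      have : Subsingleton W := (Module.finrank_zero_iff (R := K)).1 (by omega)
      exact LinearMap.ext fun _ => Subsingleton.elim _ _
    | succ n =>
      obtain ⟨a, -, b, hb, rfl⟩ := Set.mem_mul.1 (pow_succ S n ▸ hx)
      rw [hne b hb, mul_zero]
      rfl

end FiniteDimensional

end Module.End

section Quiver

variable {k : Type*} [Field k] {Q : Type*} [Quiver Q] {V : Q → Type*}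
  [∀ i, AddCommGroup (V i)] [∀ i, Module k (V i)] (f : ∀ {i j : Q}, (i ⟶ j) → (V i →ₗ[k] V j))

theorem pathMap_comp {i j l : Q} (p : Quiver.Path i j) (q : Quiver.Path j l) :
    pathMap f (p.comp q) = pathMap f q ∘ₗ pathMap f p := by
  induction q with
  | nil => rw [Quiver.Path.comp_nil, pathMap.eq_1, LinearMap.id_comp]
  | cons q a ih => rw [Quiver.Path.comp_cons, pathMap, pathMap, ih, LinearMap.comp_assoc]

theorem exists_pathMap_eq_pow {i : Q} (p : Quiver.Path i i) :
    ∀ m : ℕ, ∃ q : Quiver.Path i i, q.length = m * p.length ∧ pathMap f q = pathMap f p ^ m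
  | 0 => ⟨.nil, by simp, by rw [pow_zero, pathMap.eq_1, End.one_eq_id]⟩
  | m + 1 => by
    obtain ⟨q, hlen, hq⟩ := exists_pathMap_eq_pow p m
    refine ⟨q.comp p, by rw [Quiver.Path.length_comp, hlen, add_one_mul], ?_⟩
    rw [pathMap_comp, hq, pow_succ', End.mul_eq_comp]

variable [DecidableEq Q]

def blockEnd {i j : Q} (g : V i →ₗ[k] V j) : End k (∀ m, V m) :=
  LinearMap.single k V j ∘ₗ g ∘ₗ LinearMap.proj i

omit [Quiver Q] in
theorem blockEnd_mul_blockEnd {i j l : Q} (g : V j →ₗ[k] V l) (h : V i →ₗ[k] V j) :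
    blockEnd g * blockEnd h = blockEnd (g ∘ₗ h) := by
  ext x
  simp [blockEnd]

omit [Quiver Q] in
theorem blockEnd_mul_blockEnd_of_ne {i j j' l : Q} (hj : j ≠ j') (g : V j →ₗ[k] V l)
    (h : V i →ₗ[k] V j') : blockEnd g * blockEnd h = 0 := by
  ext x
  simp [blockEnd, Pi.single_eq_of_ne hj]

omit [Quiver Q] in
theorem blockEnd_eq_zero_iff {i j : Q} {g : V i →ₗ[k] V j} : blockEnd g = 0 ↔ g = 0 := by
  refine ⟨fun hg => LinearMap.ext fun v => ?_, fun hg => by simp [hg, blockEnd]⟩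
  simpa [blockEnd] using congr($hg (Pi.single i v) j)

omit [Quiver Q] in
theorem isNilpotent_blockEnd {i : Q} {g : End k (V i)} (hg : IsNilpotent g) :
    IsNilpotent (blockEnd g) := by
  obtain ⟨m, hm⟩ := hg
  refine ⟨m + 1, ?_⟩
  have hpow : ∀ n : ℕ, blockEnd g ^ (n + 1) = blockEnd (g ^ (n + 1)) := by
    intro n
    induction n with
    | zero => simp
    | succ n ih => rw [pow_succ, ih, blockEnd_mul_blockEnd, ← End.mul_eq_comp, ← pow_succ]
  rw [hpow, pow_succ, hm, zero_mul, blockEnd_eq_zero_iff]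

def pathBlocks : Set (End k (∀ m, V m)) :=
  {e | e = 0 ∨ ∃ (i j : Q) (p : Quiver.Path i j), 0 < p.length ∧ e = blockEnd (pathMap f p)}

theorem pathBlocks_mul_mem {a b : End k (∀ m, V m)} (ha : a ∈ pathBlocks f)
    (hb : b ∈ pathBlocks f) : a * b ∈ pathBlocks f := by
  rcases ha with rfl | ⟨j, l, p, hp, rfl⟩
  · exact Or.inl (zero_mul b)
  rcases hb with rfl | ⟨i, j', q, hq, rfl⟩
  · exact Or.inl (mul_zero _)
  by_cases hj : j = j'
  · subst hj
    refine Or.inr ⟨i, l, q.comp p, by rw [Quiver.Path.length_comp]; omega, ?_⟩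
    rw [blockEnd_mul_blockEnd, pathMap_comp]
  · exact Or.inl (blockEnd_mul_blockEnd_of_ne hj _ _)

theorem isNilpotent_of_mem_pathBlocks
    (hcycle : ∀ (i : Q) (p : Quiver.Path i i), 0 < p.length → IsNilpotent (pathMap f p))
    {e : End k (∀ m, V m)} (he : e ∈ pathBlocks f) : IsNilpotent e := by
  rcases he with rfl | ⟨i, j, p, hp, rfl⟩
  · exact IsNilpotent.zero
  by_cases hij : i = j
  · subst hij
    exact isNilpotent_blockEnd (hcycle i p hp)
  · exact ⟨2, (pow_two _).trans (blockEnd_mul_blockEnd_of_ne hij _ _)⟩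

theorem blockEnd_pathMap_cons_mem_pow {i j l : Q} (p : Quiver.Path i j) (a : j ⟶ l) :
    blockEnd (pathMap f (p.cons a)) ∈ pathBlocks f ^ (p.length + 1) := by
  have hmem {j l : Q} (a : j ⟶ l) : blockEnd (pathMap f a.toPath) ∈ pathBlocks f :=
    Or.inr ⟨_, _, a.toPath, Nat.one_pos, rfl⟩
  induction p generalizing l with
  | nil => rw [Quiver.Path.length_nil, zero_add, pow_one]; exact hmem a
  | cons p b ih =>
    rw [← (p.cons b).comp_toPath_eq_cons a, pathMap_comp, ← blockEnd_mul_blockEnd, pow_succ']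
    exact Set.mul_mem_mul (hmem a) (ih b)

end Quiver

/-- A finite-dimensional representation of a finite quiver is nilpotent (every oriented cycle
acts by a nilpotent endomorphism) iff some power `r` kills all paths of length `≥ r`. -/
theorem stmt4 {k : Type*} [Field k] {Q : Type*} [Quiver Q] [Fintype Q]
    [∀ i j : Q, Fintype (i ⟶ j)] {V : Q → Type*}
    [∀ i, AddCommGroup (V i)] [∀ i, Module k (V i)] [∀ i, FiniteDimensional k (V i)]
    (f : ∀ {i j : Q}, (i ⟶ j) → (V i →ₗ[k] V j)) :
    (∀ (i : Q) (p : Quiver.Path i i), 0 < p.length → IsNilpotent (pathMap f p)) ↔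
      (∃ r : ℕ, 0 < r ∧
        ∀ (i j : Q) (p : Quiver.Path i j), r ≤ p.length → pathMap f p = 0) := by
  classical
  constructor
  · intro hcycle
    refine ⟨finrank k (∀ m, V m) + 1, Nat.succ_pos _, fun i j p hp => ?_⟩
    cases p with
    | nil => simp at hp
    | cons q a =>
      rw [Quiver.Path.length_cons] at hp
      exact blockEnd_eq_zero_iff.1 (Module.End.levitzkiBound_of_finrank_le (by omega) _
        (fun _ ha _ hb => pathBlocks_mul_mem f ha hb)
        (fun _ => isNilpotent_of_mem_pathBlocks f hcycle) (blockEnd_pathMap_cons_mem_pow f q a))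
  · rintro ⟨r, -, hr⟩ i p hp
    obtain ⟨q, hlen, hq⟩ := exists_pathMap_eq_pow f p r
    exact ⟨r, hq ▸ hr i i q (hlen ▸ Nat.le_mul_of_pos_right r hp)⟩
end

section
/- Let Q be a finite quiver with no oriented cycles, d = (d_i) a dimension vector, and consider the polynomial ring R on the variables X_{α,p,q} (α an arrow, p ≤ d_{t(α)}, q ≤ d_{s(α)}) graded by Z^{Q̃₀} where deg(X_{α,p,q}) = e_{s(α),q} − e_{t(α),p}. Then the only monomial in R of degree zero is the constant 1. -/
noncomputable def degOf {Q : Type*} [Quiver Q] (d : Q → ℕ)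
    (x : Σ (i : Q) (j : Q) (_ : i ⟶ j), Fin (d j) × Fin (d i)) :
    (Σ i : Q, Fin (d i)) →₀ ℤ :=
  Finsupp.single ⟨x.1, x.2.2.2.2⟩ 1 - Finsupp.single ⟨x.2.1, x.2.2.2.1⟩ 1

section aux
variable {Q : Type*} [Quiver Q] (d : Q → ℕ)

/-- source node -/
def srcN (x : Σ (i : Q) (j : Q) (_ : i ⟶ j), Fin (d j) × Fin (d i)) : Σ i : Q, Fin (d i) :=
  ⟨x.1, x.2.2.2.2⟩

/-- target node -/
def tgtN (x : Σ (i : Q) (j : Q) (_ : i ⟶ j), Fin (d j) × Fin (d i)) : Σ i : Q, Fin (d i) :=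
  ⟨x.2.1, x.2.2.2.1⟩

lemma degOf_eq (x : Σ (i : Q) (j : Q) (_ : i ⟶ j), Fin (d j) × Fin (d i)) :
    degOf d x = Finsupp.single (srcN d x) 1 - Finsupp.single (tgtN d x) 1 := rfl

lemma step_lemma (m : (Σ (i : Q) (j : Q) (_ : i ⟶ j), Fin (d j) × Fin (d i)) →₀ ℕ)
    (hm : (m.sum fun x n => (n : ℤ) • degOf d x) = 0)
    (x : _) (hx : x ∈ m.support) :
    ∃ x' ∈ m.support, tgtN d x' = srcN d x := by
  classical
  by_contra hcon
  push_neg at hcon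
  have h0 := congrArg (fun f => f (srcN d x)) hm
  simp only [Finsupp.sum, Finsupp.finset_sum_apply, Finsupp.smul_apply, degOf_eq,
    Finsupp.sub_apply, Finsupp.single_apply, Finsupp.coe_zero, Pi.zero_apply] at h0
  have hpos : 0 < ∑ x' ∈ m.support,
      (m x' : ℤ) • ((if srcN d x' = srcN d x then (1:ℤ) else 0)
        - (if tgtN d x' = srcN d x then (1:ℤ) else 0)) := by
    apply Finset.sum_pos'
    · intro x' hx'
      rw [if_neg (hcon x' hx'), sub_zero, smul_eq_mul]
      split <;> simp
    · refine ⟨x, hx, ?_⟩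
      rw [if_neg (hcon x hx), if_pos rfl]
      have : 0 < m x := Nat.pos_of_ne_zero (Finsupp.mem_support_iff.mp hx)
      simpa using this
  omega

end aux

/-- If the quiver `Q` has no oriented cycles, then the only monomial in the variables
`X_{α,p,q}` of multidegree zero is the constant monomial `1` (i.e. the zero exponent
vector). -/
theorem stmt7 {Q : Type*} [Quiver Q] (d : Q → ℕ)
    (hacyc : ∀ (i : Q) (p : Quiver.Path i i), p.length = 0)
    (m : (Σ (i : Q) (j : Q) (_ : i ⟶ j), Fin (d j) × Fin (d i)) →₀ ℕ)
    (hm : (m.sum fun x n => (n : ℤ) • degOf d x) = 0) :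
    m = 0 := by
  by_contra hmne
  obtain ⟨x₀, hx₀⟩ : ∃ x, x ∈ m.support := by
    rcases Finset.eq_empty_or_nonempty m.support with h | h
    · exact absurd (Finsupp.support_eq_empty.mp h) hmne
    · exact h
  have step : ∀ x : ↥m.support, ∃ x' : ↥m.support, tgtN d x'.1 = srcN d x.1 := by
    intro x
    obtain ⟨x', hx', h⟩ := step_lemma d m hm x.1 x.2
    exact ⟨⟨x', hx'⟩, h⟩
  choose f hf using step
  set g : ℕ → ↥m.support := fun n => f^[n] ⟨x₀, hx₀⟩ with hg
  have hgs : ∀ n, tgtN d (g (n+1)).1 = srcN d (g n).1 := by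
    intro n
    have : g (n+1) = f (g n) := Function.iterate_succ_apply' f n _
    rw [this]; exact hf (g n)
  have hvert : ∀ n, (g (n+1)).1.2.1 = (g n).1.1 := fun n => congrArg Sigma.fst (hgs n)
  have chain : ∀ n a, ∃ p : Quiver.Path (g (a+n)).1.1 (g a).1.1, p.length = n := by
    intro n
    induction n with
    | zero => intro a; exact ⟨Quiver.Path.nil, rfl⟩
    | succ n ih =>
      intro a
      obtain ⟨p, hp⟩ := ih a
      have e : (g (a+n+1)).1.1 ⟶ (g (a+n)).1.1 := (hvert (a+n)) ▸ (g (a+n+1)).1.2.2.1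
      refine ⟨(e.toPath).comp p, ?_⟩
      simp only [Quiver.Path.length_comp, Quiver.Hom.toPath, Quiver.Path.length_cons,
        Quiver.Path.length_nil, hp]
      omega
  have hninj : ¬ Function.Injective g := fun hinj =>
    Set.infinite_range_of_injective hinj (Set.toFinite _)
  rw [Function.not_injective_iff] at hninj
  obtain ⟨a, b, hab, hne⟩ := hninj
  rcases hne.lt_or_gt with hlt | hlt
  case _ =>
    have key := chain (b - a) a
    rw [show a + (b - a) = b by omega] at key
    rw [← hab] at key
    obtain ⟨p, hp⟩ := key
    have := hacyc _ p
    omega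
  case _ =>
    have key := chain (a - b) b
    rw [show b + (a - b) = a by omega] at key
    rw [hab] at key
    obtain ⟨p, hp⟩ := key
    have := hacyc _ p
    omega
end

section
/- Let Q be a finite quiver with no oriented cycles and fix vertices i ≠ j and indices v ≤ d_i, u ≤ d_j. Every monomial ∏_{l≤n} X_{α_l,p_l,q_l} of multidegree e_{i,v} − e_{j,u} is, up to permutation of factors, of the form X_{α_m,u,p_{m−1}}·X_{α_{m−1},p_{m−1},p_{m−2}}·…·X_{α_1,p_1,v} where α_m…α_1 is a path in Q from i to j; i.e., the variables concatenate to a path with matching intermediate indices. -/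
/-- A list of variables `X_{α,p,q}` forms a "chain" from `src` to `tgt`: the source datum
of the first variable is `src`, the target datum of each variable matches the source
datum of the next, and the target datum of the last variable is `tgt`. -/
def linksFrom {Q : Type*} [Quiver Q] (d : Q → ℕ) :
    (Σ i : Q, Fin (d i)) → List (Σ (i : Q) (j : Q) (_ : i ⟶ j), Fin (d j) × Fin (d i)) →
      (Σ i : Q, Fin (d i)) → Prop
  | src, [], tgt => src = tgt
  | src, x :: L, tgt =>
      (⟨x.1, x.2.2.2.2⟩ : Σ i : Q, Fin (d i)) = src ∧
        linksFrom d ⟨x.2.1, x.2.2.2.1⟩ L tgt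

/-!
Read coordinatewise, the multidegree of a monomial counts at each vertex datum `w` the variables
starting at `w` minus those ending at `w`. In degree `e_{(i,v)} - e_{(j,u)}` with
`(i,v) ≠ (j,u)` some variable therefore starts at `(i,v)`; removing it leaves a monomial of degree
`e_{(t α, p)} - e_{(j,u)}`, and we recurse. The recursion ends in degree `0`, where every variable
is followed by one starting where it ends. Since `Q` is acyclic, reachability by nonempty paths is
a strict order, so among the finitely many target vertices of the variables there is one with no
arrow into the others; a variable ending there has no successor, so the monomial is empty.
-/

namespace Quiver

theorem exists_isEmpty_hom_of_finite {Q : Type*} [Quiver Q]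
    (hacyc : ∀ (i : Q) (p : Path i i), p.length = 0) {s : Set Q} (hs : s.Finite)
    (hne : s.Nonempty) : ∃ a ∈ s, ∀ b ∈ s, IsEmpty (a ⟶ b) := by
  let r : Q → Q → Prop := fun b a => ∃ p : Path a b, 0 < p.length
  have : IsStrictOrder Q r :=
    { irrefl := fun a ⟨p, hp⟩ => hp.ne' (hacyc a p)
      trans := fun _ _ _ ⟨p, hp⟩ ⟨q, hq⟩ => ⟨q.comp p, by rw [Path.length_comp]; omega⟩ }
  obtain ⟨⟨a, ha⟩, -, hmin⟩ :=
    (hs.wellFoundedOn (r := r)).has_min Set.univ ⟨⟨_, hne.some_mem⟩, trivial⟩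
  exact ⟨a, ha, fun b hb => ⟨fun f => hmin ⟨b, hb⟩ trivial ⟨f.toPath, Nat.one_pos⟩⟩⟩

end Quiver

abbrev ArrowVar (Q : Type*) [Quiver Q] (d : Q → ℕ) :=
  Σ (i : Q) (j : Q) (_ : i ⟶ j), Fin (d j) × Fin (d i)

namespace ArrowVar

variable {Q : Type*} [Quiver Q] {d : Q → ℕ}

def src (x : ArrowVar Q d) : Σ i : Q, Fin (d i) := ⟨x.1, x.2.2.2.2⟩

def tgt (x : ArrowVar Q d) : Σ i : Q, Fin (d i) := ⟨x.2.1, x.2.2.2.1⟩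

theorem degOf_eq (x : ArrowVar Q d) :
    degOf d x = Finsupp.single x.src 1 - Finsupp.single x.tgt 1 := rfl

open scoped Classical in
theorem sum_degOf_apply (L : List (ArrowVar Q d)) (w : Σ i : Q, Fin (d i)) :
    (L.map (degOf d)).sum w = (L.countP (·.src = w) : ℤ) - L.countP (·.tgt = w) := by
  induction L with
  | nil => simp
  | cons x L ih =>
    simp only [List.map_cons, List.sum_cons, Finsupp.add_apply, ih, degOf_eq,
      Finsupp.sub_apply, Finsupp.single_apply, List.countP_cons, decide_eq_true_eq]
    split_ifs <;> push_cast <;> ring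

theorem exists_mem_src_eq_of_sum_degOf_pos {L : List (ArrowVar Q d)} {w : Σ i : Q, Fin (d i)}
    (h : 0 < (L.map (degOf d)).sum w) : ∃ x ∈ L, x.src = w := by
  classical
  rw [sum_degOf_apply] at h
  simpa using List.countP_pos_iff.mp (by omega : 0 < L.countP (·.src = w))

theorem exists_mem_src_eq_tgt_of_sum_degOf_eq_zero {L : List (ArrowVar Q d)}
    (h : (L.map (degOf d)).sum = 0) {x : ArrowVar Q d} (hx : x ∈ L) :
    ∃ y ∈ L, y.src = x.tgt := by
  classical
  have hcoeff := congrArg (· x.tgt) h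
  have htgt : 0 < L.countP (·.tgt = x.tgt) := List.countP_pos_iff.mpr ⟨x, hx, by simp⟩
  simp only [sum_degOf_apply, Finsupp.coe_zero, Pi.zero_apply] at hcoeff
  simpa using List.countP_pos_iff.mp (by omega : 0 < L.countP (·.src = x.tgt))

theorem eq_nil_of_sum_degOf_eq_zero (hacyc : ∀ (i : Q) (p : Quiver.Path i i), p.length = 0)
    {L : List (ArrowVar Q d)} (h : (L.map (degOf d)).sum = 0) : L = [] := by
  by_contra hL
  obtain ⟨x₀, hx₀⟩ := List.exists_mem_of_ne_nil L hL
  obtain ⟨a, ha, hsink⟩ := Quiver.exists_isEmpty_hom_of_finite hacyc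
    (List.finite_toSet (L.map (·.2.1))) ⟨x₀.2.1, List.mem_map_of_mem (f := (·.2.1)) hx₀⟩
  obtain ⟨x, hx, rfl⟩ := List.mem_map.mp ha
  obtain ⟨y, hy, hyx⟩ := exists_mem_src_eq_tgt_of_sum_degOf_eq_zero h hx
  have hvert : y.1 = x.2.1 := congrArg Sigma.fst hyx
  exact (hsink y.2.1 (List.mem_map.mpr ⟨y, hy, rfl⟩)).false (hvert ▸ y.2.2.1)

open scoped Classical in
theorem exists_perm_linksFrom (hacyc : ∀ (i : Q) (p : Quiver.Path i i), p.length = 0)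
    (src tgt : Σ i : Q, Fin (d i)) (L : List (ArrowVar Q d))
    (hdeg : (L.map (degOf d)).sum = Finsupp.single src 1 - Finsupp.single tgt 1) :
    ∃ L', L.Perm L' ∧ linksFrom d src L' tgt := by
  by_cases hst : src = tgt
  · subst hst
    obtain rfl : L = [] := eq_nil_of_sum_degOf_eq_zero hacyc (by simpa using hdeg)
    exact ⟨[], .refl _, rfl⟩
  obtain ⟨x, hx, rfl⟩ : ∃ x ∈ L, x.src = src :=
    exists_mem_src_eq_of_sum_degOf_pos (by simp [hdeg, Ne.symm hst])
  have hdeg' : ((L.erase x).map (degOf d)).sum =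
      Finsupp.single x.tgt 1 - Finsupp.single tgt 1 := by
    rw [← List.sum_map_erase (degOf d) hx, degOf_eq] at hdeg
    linear_combination (norm := abel) hdeg
  obtain ⟨L', hperm, hlinks⟩ := exists_perm_linksFrom hacyc x.tgt tgt (L.erase x) hdeg'
  exact ⟨x :: L', (List.perm_cons_erase hx).trans (hperm.cons x), rfl, hlinks⟩
termination_by L.length
decreasing_by
  rw [List.length_erase_of_mem hx]
  exact Nat.sub_lt (List.length_pos_of_mem hx) Nat.one_pos

end ArrowVar

theorem stmt8_general {Q : Type*} [Quiver Q] (d : Q → ℕ)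
    (hacyc : ∀ (i : Q) (p : Quiver.Path i i), p.length = 0)
    (i j : Q) (v : Fin (d i)) (u : Fin (d j))
    (L : List (Σ (i : Q) (j : Q) (_ : i ⟶ j), Fin (d j) × Fin (d i)))
    (hdeg : (L.map (degOf d)).sum =
      Finsupp.single ⟨i, v⟩ 1 - Finsupp.single ⟨j, u⟩ 1) :
    ∃ L', L.Perm L' ∧ linksFrom d ⟨i, v⟩ L' ⟨j, u⟩ :=
  ArrowVar.exists_perm_linksFrom hacyc ⟨i, v⟩ ⟨j, u⟩ L hdeg

/-- If `Q` has no oriented cycles, then every monomial of multidegree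
`e_{(i,v)} - e_{(j,u)}` is, up to a permutation of its factors, a product
`X_{α_m,u,p_{m-1}} ⋯ X_{α_1,p_1,v}` whose variables concatenate to a path
`α_m…α_1` in `Q` from `i` to `j` with matching intermediate indices. -/
theorem stmt8 {Q : Type*} [Quiver Q] (d : Q → ℕ)
    (hacyc : ∀ (i : Q) (p : Quiver.Path i i), p.length = 0)
    (i j : Q) (hij : i ≠ j) (v : Fin (d i)) (u : Fin (d j))
    (L : List (Σ (i : Q) (j : Q) (_ : i ⟶ j), Fin (d j) × Fin (d i)))
    (hdeg : (L.map (degOf d)).sum =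
      Finsupp.single ⟨i, v⟩ 1 - Finsupp.single ⟨j, u⟩ 1) :
    ∃ L', L.Perm L' ∧ linksFrom d ⟨i, v⟩ L' ⟨j, u⟩ :=
  stmt8_general d hacyc i j v u L hdeg
end

section
/- Let Q be a finite quiver, d a dimension vector, and V ∈ rep_Q(d) a nilpotent representation with a composition series 0 = N(0) ⊂ … ⊂ N(d) = V adapted to a basis ε₁,…,ε_d (each ε_b lying in a single vertex space and ε₁,…,ε_b spanning N(b)). Given strictly decreasing integers p₁ > p₂ > … > p_d, define φ: k* → GL(d), φ(t)(ε_b) = t^{p_b}·ε_b. Then the map ψ: k → rep_Q(d) with ψ(t) = φ(t)∗V for t ≠ 0 extends to a regular (polynomial) map with ψ(0) = 0; i.e., each matrix entry of (φ(t)∗V)_β in the basis {ε_b} is a polynomial in t vanishing at t = 0. -/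
/-- Suppose the matrices `V_β` of a representation are triangular with respect to integer
weights `w` on the basis data `(i, q)` (i.e. `V_β p q ≠ 0` forces `w (i,q) < w (j,p)`,
which holds for the weights `p_b` of a composition-series-adapted basis with strictly
decreasing exponents `p₁ > p₂ > … > p_D`). Then every matrix entry of
`(φ(t) ∗ V)_β = g_j V_β g_i⁻¹`, where `φ(t)` is the diagonal one-parameter subgroup
`ε_b ↦ t^{p_b} ε_b`, is a polynomial in `t` vanishing at `t = 0`; thus
`ψ(t) = φ(t) ∗ V` extends to a regular map `ψ : k → rep_Q(d)` with `ψ(0) = 0`. -/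
theorem stmt15 {k : Type*} [Field k] {Q : Type*} [Quiver Q] (d : Q → ℕ)
    (V : ∀ {i j : Q}, (i ⟶ j) → Matrix (Fin (d j)) (Fin (d i)) k)
    (w : (Σ i : Q, Fin (d i)) → ℤ)
    (htri : ∀ (i j : Q) (β : i ⟶ j) (p : Fin (d j)) (q : Fin (d i)),
      V β p q ≠ 0 → w ⟨i, q⟩ < w ⟨j, p⟩) :
    ∀ (i j : Q) (β : i ⟶ j) (p : Fin (d j)) (q : Fin (d i)),
      ∃ P : Polynomial k, P.eval 0 = 0 ∧
        ∀ t : k, t ≠ 0 → t ^ (w ⟨j, p⟩) * V β p q * (t ^ (w ⟨i, q⟩))⁻¹ = P.eval t := by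
  intro i j β p q
  by_cases h : V β p q = 0
  · exact ⟨0, by simp, fun t ht => by simp [h]⟩
  · have hw := htri i j β p q h
    set a := w ⟨i, q⟩
    set b := w ⟨j, p⟩
    refine ⟨Polynomial.C (V β p q) * Polynomial.X ^ (b - a).toNat, ?_, ?_⟩
    · have : (b - a).toNat ≠ 0 := by omega
      simp [this]
    · intro t ht
      have h1 : t ^ b * (t ^ a)⁻¹ = t ^ (b - a) := by
        rw [← zpow_neg, ← zpow_add₀ ht]; ring_nf
      have h2 : t ^ (b - a) = t ^ (b - a).toNat := by
        rw [← zpow_natCast, Int.toNat_of_nonneg (by omega)]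
      rw [mul_comm (t ^ b) (V β p q), mul_assoc, h1, h2]
      simp [mul_comm]
end
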